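/- arXiv:1411.1994 — 4 statements merged into one kernel-verified Lean document; each statement's English description precedes it below -/
import Mathlib

section
/- For any real κ > 0 and ρ > 0, exp(−2√(κρ)) = (√κ/√π) ∫₀^∞ t^{−3/2} exp(−κ/t) exp(−ρt) dt. -/
/-!
Substituting `t = x⁻²` turns the integral into `2 ∫₀^∞ exp (-κ x² - ρ / x²) dx`. With `a = √κ`,
`b = √ρ` the exponent is `-(a x - b / x)² - 2 a b`, and the Cauchy–Schlömilch substitution
`u = a x - b / x`, `du = (a + b / x²) dx`, maps `(0, ∞)` monotonically onto `ℝ`, so the weighted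
integral `∫₀^∞ (a + b / x²) exp (-(a x - b / x)²) dx` is the Gaussian integral `√π`. The inversion
`x ↦ b / (a x)` preserves `(a x - b / x)²` and shows that both summands of the weight contribute
equally, whence `∫₀^∞ exp (-(a x - b / x)²) dx = √π / (2 a)`.
-/

open MeasureTheory Real Set

section CauchySchlomilch

variable {E : Type*} [NormedAddCommGroup E] [NormedSpace ℝ E] {a b : ℝ}

theorem hasDerivAt_mul_sub_div (a b : ℝ) {x : ℝ} (hx : x ≠ 0) :
    HasDerivAt (fun x => a * x - b / x) (a + b / x ^ 2) x := by
  have h := ((hasDerivAt_id' x).const_mul a).fun_sub ((hasDerivAt_inv hx).const_mul b)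
  simp only [← div_eq_mul_inv] at h
  exact h.congr_deriv (by ring)

theorem strictMonoOn_mul_sub_div (ha : 0 < a) (hb : 0 ≤ b) :
    StrictMonoOn (fun x => a * x - b / x) (Ioi 0) := by
  intro x hx y _ hxy
  have : b / y ≤ b / x := div_le_div_of_nonneg_left hb hx hxy.le
  have : a * x < a * y := mul_lt_mul_of_pos_left hxy ha
  dsimp only
  linarith

theorem image_mul_sub_div_Ioi (ha : 0 < a) (hb : 0 < b) :
    (fun x => a * x - b / x) '' Ioi 0 = univ := by
  refine eq_univ_of_forall fun u => ?_
  -- the positive root of `a x ^ 2 - u x - b`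
  set d := √(u ^ 2 + 4 * a * b)
  have hd : d ^ 2 = u ^ 2 + 4 * a * b := sq_sqrt (by positivity)
  have hud : -u < d := by nlinarith [sqrt_nonneg (u ^ 2 + 4 * a * b), mul_pos ha hb]
  have hx : 0 < (u + d) / (2 * a) := div_pos (by linarith) (by positivity)
  have hud' : u + d ≠ 0 := by linarith
  refine ⟨(u + d) / (2 * a), hx, ?_⟩
  field_simp
  linear_combination hd

theorem integral_comp_mul_sub_div_Ioi (f : ℝ → E) (ha : 0 < a) (hb : 0 < b) :
    ∫ x in Ioi 0, (a + b / x ^ 2) • f (a * x - b / x) = ∫ u, f u := by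
  have := integral_image_eq_integral_abs_deriv_smul measurableSet_Ioi
    (fun x hx => (hasDerivAt_mul_sub_div a b (ne_of_gt hx)).hasDerivWithinAt)
    (strictMonoOn_mul_sub_div ha hb.le).injOn f
  rw [image_mul_sub_div_Ioi ha hb, setIntegral_univ] at this
  rw [this]
  refine setIntegral_congr_fun measurableSet_Ioi fun x _ => ?_
  rw [abs_of_pos (by positivity)]

theorem integrableOn_comp_mul_sub_div_Ioi_iff (f : ℝ → E) (ha : 0 < a) (hb : 0 < b) :
    IntegrableOn (fun x => (a + b / x ^ 2) • f (a * x - b / x)) (Ioi 0) ↔ Integrable f := by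
  have := integrableOn_image_iff_integrableOn_abs_deriv_smul measurableSet_Ioi
    (fun x hx => (hasDerivAt_mul_sub_div a b (ne_of_gt hx)).hasDerivWithinAt)
    (strictMonoOn_mul_sub_div ha hb.le).injOn f
  rw [image_mul_sub_div_Ioi ha hb, integrableOn_univ] at this
  rw [this]
  refine integrableOn_congr_fun (fun x _ => ?_) measurableSet_Ioi
  rw [abs_of_pos (by positivity)]

theorem integral_comp_div_Ioi (f : ℝ → E) {c : ℝ} (hc : 0 < c) :
    ∫ x in Ioi 0, (c / x ^ 2) • f (c / x) = ∫ x in Ioi 0, f x := by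
  have himage : (fun x => c * x⁻¹) '' Ioi 0 = Ioi 0 := by
    refine Subset.antisymm (image_subset_iff.2 fun x hx => by simp_all) fun y hy => ?_
    exact ⟨c / y, div_pos hc hy, by field_simp⟩
  have := integral_image_eq_integral_abs_deriv_smul measurableSet_Ioi
    (fun x hx => (hasDerivAt_inv (ne_of_gt hx)).const_mul c |>.hasDerivWithinAt)
    (fun x _ y _ h => by simpa [hc.ne'] using h) f
  rw [himage] at this
  rw [this]
  refine setIntegral_congr_fun measurableSet_Ioi fun x (hx : 0 < x) => ?_
  rw [mul_neg, abs_neg, abs_of_pos (by positivity), div_eq_mul_inv, div_eq_mul_inv]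

end CauchySchlomilch

theorem integral_exp_neg_sq_mul_sub_div_Ioi {a b : ℝ} (ha : 0 < a) (hb : 0 < b) :
    ∫ x in Ioi 0, exp (-(a * x - b / x) ^ 2) = √π / (2 * a) := by
  set g : ℝ → ℝ := fun x => exp (-(a * x - b / x) ^ 2)
  have hgauss : Integrable fun u : ℝ => exp (-u ^ 2) := by
    simpa using integrable_exp_neg_mul_sq one_pos
  have hweighted : ∫ x in Ioi 0, (a + b / x ^ 2) * g x = √π := by
    simpa using (integral_comp_mul_sub_div_Ioi (fun u => exp (-u ^ 2)) ha hb).trans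
      (by simpa using integral_gaussian 1)
  have hweighted_int : IntegrableOn (fun x => (a + b / x ^ 2) * g x) (Ioi 0) :=
    (integrableOn_comp_mul_sub_div_Ioi_iff (fun u => exp (-u ^ 2)) ha hb).2 hgauss
  have hg_int : IntegrableOn g (Ioi 0) := by
    refine (hweighted_int.const_mul a⁻¹).mono' (by fun_prop) ?_
    filter_upwards [ae_restrict_mem measurableSet_Ioi] with x (hx : 0 < x)
    have : a ≤ a + b / x ^ 2 := le_add_of_nonneg_right (by positivity)
    rw [norm_of_nonneg (exp_pos _).le, ← mul_assoc]
    exact le_mul_of_one_le_left (exp_pos _).le ((one_le_inv_mul₀ ha).2 this)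
  -- `x ↦ (b / a) / x` preserves `g` and exchanges the two halves of the weight `a + b / x ^ 2`
  have hsymm : ∫ x in Ioi 0, b / x ^ 2 * g x = a * ∫ x in Ioi 0, g x := by
    rw [← integral_comp_div_Ioi g (div_pos hb ha), ← integral_const_mul]
    refine setIntegral_congr_fun measurableSet_Ioi fun x (hx : 0 < x) => ?_
    have : (a * (b / a / x) - b / (b / a / x)) ^ 2 = (a * x - b / x) ^ 2 := by
      field_simp; ring
    simp only [g, smul_eq_mul, this]
    field_simp
  have hsplit : ∫ x in Ioi 0, b / x ^ 2 * g x = √π - a * ∫ x in Ioi 0, g x := by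
    rw [← hweighted, ← integral_const_mul, ← integral_sub hweighted_int (hg_int.const_mul a)]
    congr 1; ext x; ring
  field_simp
  linarith

theorem integral_exp_neg_mul_sq_mul_exp_neg_div_sq_Ioi {κ ρ : ℝ} (hκ : 0 < κ) (hρ : 0 < ρ) :
    ∫ x in Ioi 0, exp (-(κ * x ^ 2)) * exp (-(ρ / x ^ 2)) =
      √π / (2 * √κ) * exp (-(2 * √(κ * ρ))) := by
  rw [← integral_exp_neg_sq_mul_sub_div_Ioi (sqrt_pos.2 hκ) (sqrt_pos.2 hρ), mul_comm,
    ← integral_const_mul]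
  refine setIntegral_congr_fun measurableSet_Ioi fun x (hx : 0 < x) => ?_
  rw [← exp_add, ← exp_add, sqrt_mul hκ.le]
  congr 1
  field_simp
  linear_combination x ^ 4 * sq_sqrt hκ.le + sq_sqrt hρ.le

theorem laplace_slater (κ ρ : ℝ) (hκ : 0 < κ) (hρ : 0 < ρ) :
    Real.exp (-(2 * Real.sqrt (κ * ρ))) =
      (Real.sqrt κ / Real.sqrt Real.pi) *
        ∫ t in Set.Ioi (0 : ℝ),
          t ^ (-(3 / 2 : ℝ)) * Real.exp (-(κ / t)) * Real.exp (-(ρ * t)) := by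
  have hsubst := integral_comp_rpow_Ioi
    (fun t => t ^ (-(3 / 2 : ℝ)) * exp (-(κ / t)) * exp (-(ρ * t))) (p := -2) (by norm_num)
  have hpoint : ∀ x ∈ Ioi (0 : ℝ), (|(-2 : ℝ)| * x ^ ((-2 : ℝ) - 1)) •
      ((x ^ (-2 : ℝ)) ^ (-(3 / 2 : ℝ)) * exp (-(κ / x ^ (-2 : ℝ))) * exp (-(ρ * x ^ (-2 : ℝ)))) =
      2 * (exp (-(κ * x ^ 2)) * exp (-(ρ / x ^ 2))) := by
    intro x (hx : 0 < x)
    rw [← rpow_mul hx.le]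
    norm_num
    field_simp
  rw [← hsubst, setIntegral_congr_fun measurableSet_Ioi hpoint, integral_const_mul,
    integral_exp_neg_mul_sq_mul_exp_neg_div_sq_Ioi hκ hρ]
  field_simp
end

section
/- Let the shifted tensors T_k = ∑_{q=1}^R (W^{(1)}_{k₁} p_q^{(1)}) ⊗ (W^{(2)}_{k₂} p_q^{(2)}) ⊗ (W^{(3)}_{k₃} p_q^{(3)}) for k = (k₁,k₂,k₃) ∈ K³, where W^{(ℓ)}_{kₗ} : ℝ^{2N} → ℝ^{N} are linear maps depending only on the single index kₗ. Then ∑_{k∈K³} T_k = ∑_{q=1}^R (∑_{k₁∈K} W^{(1)}_{k₁} p_q^{(1)}) ⊗ (∑_{k₂∈K} W^{(2)}_{k₂} p_q^{(2)}) ⊗ (∑_{k₃∈K} W^{(3)}_{k₃} p_q^{(3)}); in particular the full lattice sum has canonical rank at most R. -/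
open Finset

lemma tripleprod {κ : Type*} [Fintype κ] (u v w : κ → ℝ) :
    ∑ k : κ × κ × κ, u k.1 * v k.2.1 * w k.2.2 =
      (∑ x, u x) * (∑ x, v x) * (∑ x, w x) := by
  rw [Finset.sum_mul_sum, Finset.sum_mul_sum]
  simp [Fintype.sum_prod_type, Finset.sum_mul]
  exact Finset.sum_congr rfl fun _ _ => Finset.sum_comm

/-- Outer product of three vectors: `(u ⊗ v ⊗ w)_{ijk} = uᵢ vⱼ wₖ`. -/
def outer {n : ℕ} (u v w : Fin n → ℝ) : Fin n → Fin n → Fin n → ℝ :=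
  fun i j k => u i * v j * w k

theorem assembled_canonical_lattice_sum (N R : ℕ) (κ : Type*) [Fintype κ]
    (W : Fin 3 → κ → ((Fin (2 * N) → ℝ) →ₗ[ℝ] (Fin N → ℝ)))
    (p : Fin 3 → Fin R → Fin (2 * N) → ℝ) :
    (∑ k : κ × κ × κ, ∑ q : Fin R,
        outer (W 0 k.1 (p 0 q)) (W 1 k.2.1 (p 1 q)) (W 2 k.2.2 (p 2 q))) =
      ∑ q : Fin R,
        outer (∑ k₁ : κ, W 0 k₁ (p 0 q)) (∑ k₂ : κ, W 1 k₂ (p 1 q))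
          (∑ k₃ : κ, W 2 k₃ (p 2 q)) := by
  rw [Finset.sum_comm]
  refine Finset.sum_congr rfl fun q _ => ?_
  funext i j k
  simp only [outer, Finset.sum_apply]
  exact tripleprod (fun x => W 0 x (p 0 q) i) (fun x => W 1 x (p 1 q) j)
    (fun x => W 2 x (p 2 q) k)
end

section
/- Let A = ∑_{ν=1}^{R} ξ_ν a_ν^{(1)} ⊗ a_ν^{(2)} ⊗ a_ν^{(3)} with unit-norm vectors a_ν^{(ℓ)} ∈ ℝⁿ, and let A^{(ℓ)} ∈ ℝ^{n×R} be the side matrix with columns a_ν^{(ℓ)}. Let Z₀^{(ℓ)} ∈ ℝ^{n×rₗ} be the orthonormal matrix of the rₗ dominant left singular vectors of A^{(ℓ)}, and let A⁰_(r) be the orthogonal projection of A onto the subspaces spanned by Z₀^{(1)}, Z₀^{(2)}, Z₀^{(3)} (the reduced HOSVD approximation). Then ‖A − A⁰_(r)‖ ≤ (∑_{ν=1}^R ξ_ν²)^{1/2} · ∑_{ℓ=1}^{3} (∑_{k=rₗ+1}^{min(n,R)} σ_{ℓ,k}²)^{1/2}, where σ_{ℓ,k} are the singular values of A^{(ℓ)}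 in decreasing order and ‖·‖ is the Frobenius norm. -/
/-!
Write `Pₗ` for the projection onto the `rₗ` dominant left singular vectors of the side matrix
`A⁽ˡ⁾`, acting on mode `ℓ`. Telescoping,
`A - P₀P₁P₂A = (1 - P₀)A + P₀(1 - P₁)A + P₀P₁(1 - P₂)A`, and every `Pₗ` is a contraction for the
Frobenius norm, so the error is at most `∑ₗ ‖(1 - Pₗ)A‖`. Applying `1 - Pₗ` in mode `ℓ` replaces
each side vector `a_ν⁽ˡ⁾` by its residual `w_ν`; with the other side vectors of unit length,
Cauchy–Schwarz over `ν` gives `‖(1 - Pₗ)A‖² ≤ (∑ ξ_ν²) ∑ ‖w_ν‖²`, and by orthonormality of the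
singular vectors `∑ ‖w_ν‖²` is the sum of the squares of the discarded singular values.
-/

open Finset Real Matrix

section Orthonormal

variable {α : Type*} [Fintype α] {m : ℕ} {z : ℕ → α → ℝ}

lemma sum_sq_eq_dotProduct_self (x : α → ℝ) : ∑ i, x i ^ 2 = x ⬝ᵥ x := by
  simp only [dotProduct, sq]

def projOnto (z : ℕ → α → ℝ) (r : ℕ) : Matrix α α ℝ :=
  fun i i' => ∑ t ∈ range r, z t i * z t i'

lemma projOnto_mulVec (r : ℕ) (x : α → ℝ) :
    projOnto z r *ᵥ x = ∑ t ∈ range r, (z t ⬝ᵥ x) • z t := by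
  ext i
  simp only [mulVec, dotProduct, projOnto, Finset.sum_apply, Pi.smul_apply, smul_eq_mul, sum_mul]
  rw [sum_comm]
  exact sum_congr rfl fun t _ => sum_congr rfl fun i' _ => by ring

lemma dotProduct_sum_smul_of_orthonormal
    (hz : ∀ k < m, ∀ k' < m, z k ⬝ᵥ z k' = if k = k' then 1 else 0)
    {s : Finset ℕ} (hs : ∀ t ∈ s, t < m) (c : ℕ → ℝ) {k : ℕ} (hk : k < m) :
    z k ⬝ᵥ ∑ t ∈ s, c t • z t = if k ∈ s then c k else 0 := by
  simp only [dotProduct_sum, dotProduct_smul, smul_eq_mul]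
  rw [sum_congr rfl fun t ht => by rw [hz k hk t (hs t ht)]]
  simp

lemma sum_smul_dotProduct_self_of_orthonormal
    (hz : ∀ k < m, ∀ k' < m, z k ⬝ᵥ z k' = if k = k' then 1 else 0)
    {s : Finset ℕ} (hs : ∀ t ∈ s, t < m) (c : ℕ → ℝ) :
    (∑ t ∈ s, c t • z t) ⬝ᵥ (∑ t ∈ s, c t • z t) = ∑ t ∈ s, c t ^ 2 := by
  rw [sum_dotProduct]
  refine sum_congr rfl fun t ht => ?_
  rw [smul_dotProduct, dotProduct_sum_smul_of_orthonormal hz hs c (hs t ht), if_pos ht,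
    smul_eq_mul, sq]

/- Bessel: `⟪x, Px⟫ = ‖Px‖² = ∑ ⟪z t, x⟫²`, so `0 ≤ ‖x - Px‖² = ‖x‖² - ‖Px‖²`. -/
lemma sum_sq_projOnto_mulVec_le
    (hz : ∀ k < m, ∀ k' < m, z k ⬝ᵥ z k' = if k = k' then 1 else 0)
    {r : ℕ} (hr : r ≤ m) (x : α → ℝ) :
    ∑ i, (projOnto z r *ᵥ x) i ^ 2 ≤ ∑ i, x i ^ 2 := by
  have hs : ∀ t ∈ range r, t < m := fun t ht => (mem_range.mp ht).trans_le hr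
  have hPx := projOnto_mulVec (z := z) r x
  have hPxPx : (projOnto z r *ᵥ x) ⬝ᵥ (projOnto z r *ᵥ x) = ∑ t ∈ range r, (z t ⬝ᵥ x) ^ 2 := by
    rw [hPx]
    exact sum_smul_dotProduct_self_of_orthonormal hz hs _
  have hxPx : x ⬝ᵥ (projOnto z r *ᵥ x) = ∑ t ∈ range r, (z t ⬝ᵥ x) ^ 2 := by
    rw [hPx]
    simp only [dotProduct_sum, dotProduct_smul, smul_eq_mul]
    exact sum_congr rfl fun t _ => by rw [dotProduct_comm, sq]
  have hres : 0 ≤ (x - projOnto z r *ᵥ x) ⬝ᵥ (x - projOnto z r *ᵥ x) := by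
    rw [← sum_sq_eq_dotProduct_self]
    positivity
  rw [sum_sq_eq_dotProduct_self, sum_sq_eq_dotProduct_self]
  simp only [sub_dotProduct, dotProduct_sub, dotProduct_comm _ x, hxPx, hPxPx] at hres ⊢
  linarith

lemma projOnto_mulVec_sum_smul
    (hz : ∀ k < m, ∀ k' < m, z k ⬝ᵥ z k' = if k = k' then 1 else 0)
    {r : ℕ} (hr : r ≤ m) (d : ℕ → ℝ) :
    projOnto z r *ᵥ ∑ k ∈ range m, d k • z k = ∑ k ∈ range r, d k • z k := by
  rw [projOnto_mulVec]
  refine sum_congr rfl fun t ht => ?_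
  have htm : t < m := (mem_range.mp ht).trans_le hr
  rw [dotProduct_sum_smul_of_orthonormal hz (fun _ => mem_range.mp) d htm,
    if_pos (mem_range.mpr htm)]

lemma one_sub_projOnto_mulVec_sum_smul [DecidableEq α]
    (hz : ∀ k < m, ∀ k' < m, z k ⬝ᵥ z k' = if k = k' then 1 else 0)
    {r : ℕ} (hr : r ≤ m) (d : ℕ → ℝ) :
    (1 - projOnto z r) *ᵥ ∑ k ∈ range m, d k • z k = ∑ k ∈ Ico r m, d k • z k := by
  rw [sub_mulVec, one_mulVec, projOnto_mulVec_sum_smul hz hr, ← sum_range_add_sum_Ico _ hr,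
    add_sub_cancel_left]

lemma sum_sum_sq_one_sub_projOnto_mulVec [DecidableEq α] {β : Type*} [Fintype β]
    (hz : ∀ k < m, ∀ k' < m, z k ⬝ᵥ z k' = if k = k' then 1 else 0)
    {σ : ℕ → ℝ} {v : ℕ → β → ℝ} (hv : ∀ k < m, v k ⬝ᵥ v k = 1)
    {a : β → α → ℝ} (ha : ∀ ν, a ν = ∑ k ∈ range m, (σ k * v k ν) • z k)
    {r : ℕ} (hr : r ≤ m) :
    ∑ ν, ∑ i, ((1 - projOnto z r) *ᵥ a ν) i ^ 2 = ∑ k ∈ Ico r m, σ k ^ 2 := by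
  have hs : ∀ t ∈ Ico r m, t < m := fun t ht => (mem_Ico.mp ht).2
  simp only [sum_sq_eq_dotProduct_self, ha, one_sub_projOnto_mulVec_sum_smul hz hr,
    sum_smul_dotProduct_self_of_orthonormal hz hs, mul_pow]
  rw [sum_comm]
  refine sum_congr rfl fun k hk => ?_
  rw [← mul_sum, sum_sq_eq_dotProduct_self, hv k (hs k hk), mul_one]

end Orthonormal

lemma sum_sum_sq_sum_mul_le {β γ κ : Type*} [Fintype β] [Fintype γ] [Fintype κ]
    (u : κ → β → ℝ) (q : κ → γ → ℝ) :
    ∑ x, ∑ y, (∑ ν, u ν x * q ν y) ^ 2 ≤ (∑ ν, ∑ x, u ν x ^ 2) * ∑ ν, ∑ y, q ν y ^ 2 := by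
  calc ∑ x, ∑ y, (∑ ν, u ν x * q ν y) ^ 2
      ≤ ∑ x, ∑ y, (∑ ν, u ν x ^ 2) * ∑ ν, q ν y ^ 2 :=
        sum_le_sum fun x _ => sum_le_sum fun y _ => sum_mul_sq_le_sq_mul_sq _ _ _
    _ = (∑ x, ∑ ν, u ν x ^ 2) * ∑ y, ∑ ν, q ν y ^ 2 := (sum_mul_sum _ _ _ _).symm
    _ = (∑ ν, ∑ x, u ν x ^ 2) * ∑ ν, ∑ y, q ν y ^ 2 := by
        rw [sum_comm (γ := β), sum_comm (γ := γ)]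

lemma prod_eq_mul_prod_subtype_ne {ι M : Type*} [Fintype ι] [DecidableEq ι] [CommMonoid M]
    (f : ι → M) (ℓ : ι) : ∏ m, f m = f ℓ * ∏ j : {j // j ≠ ℓ}, f j := by
  rw [← mul_prod_erase univ f (mem_univ ℓ),
    prod_subtype (p := (· ≠ ℓ)) (univ.erase ℓ) (by simp) f]

section Tensor

variable {ι α : Type*} [DecidableEq ι]

lemma sum_eq_sum_sum_funSplitAt [Fintype ι] [Fintype α] (ℓ : ι) (F : (ι → α) → ℝ) :
    ∑ idx, F idx = ∑ y : {j // j ≠ ℓ} → α, ∑ x, F ((Equiv.funSplitAt ℓ α).symm (x, y)) := by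
  rw [← (Equiv.funSplitAt ℓ α).symm.sum_comp, Fintype.sum_prod_type, sum_comm]

lemma update_funSplitAt_symm (ℓ : ι) (x x' : α) (y : {j // j ≠ ℓ} → α) :
    Function.update ((Equiv.funSplitAt ℓ α).symm (x, y)) ℓ x' =
      (Equiv.funSplitAt ℓ α).symm (x', y) := by
  ext j
  by_cases hj : j = ℓ
  · subst hj; simp
  · simp [hj]

noncomputable def frobNorm [Fintype ι] [Fintype α] (T : (ι → α) → ℝ) : ℝ :=
  √(∑ idx, T idx ^ 2)

lemma frobNorm_add_le [Fintype ι] [Fintype α] (T T' : (ι → α) → ℝ) :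
    frobNorm (T + T') ≤ frobNorm T + frobNorm T' := by
  have h : ∀ S : (ι → α) → ℝ, frobNorm S = ‖WithLp.toLp 2 S‖ := fun S => by
    simp [frobNorm, EuclideanSpace.norm_eq]
  simpa only [h, WithLp.toLp_add] using norm_add_le _ _

def modeProduct [Fintype α] (ℓ : ι) (M : Matrix α α ℝ) : ((ι → α) → ℝ) →ₗ[ℝ] (ι → α) → ℝ where
  toFun T idx := ∑ x, M (idx ℓ) x * T (Function.update idx ℓ x)
  map_add' T T' := by ext; simp [mul_add, sum_add_distrib]
  map_smul' c T := by ext; simp [mul_sum, mul_left_comm]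

lemma modeProduct_apply [Fintype α] (ℓ : ι) (M : Matrix α α ℝ) (T : (ι → α) → ℝ)
    (idx : ι → α) : modeProduct ℓ M T idx = ∑ x, M (idx ℓ) x * T (Function.update idx ℓ x) :=
  rfl

lemma modeProduct_one_sub [Fintype α] [DecidableEq α] (ℓ : ι) (M : Matrix α α ℝ)
    (T : (ι → α) → ℝ) : modeProduct ℓ (1 - M) T = T - modeProduct ℓ M T := by
  ext idx
  simp [modeProduct_apply, sub_mul, sum_sub_distrib, one_apply]

lemma modeProduct_funSplitAt_symm [Fintype α] (ℓ : ι) (M : Matrix α α ℝ) (T : (ι → α) → ℝ)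
    (x : α) (y : {j // j ≠ ℓ} → α) :
    modeProduct ℓ M T ((Equiv.funSplitAt ℓ α).symm (x, y)) =
      (M *ᵥ fun x' => T ((Equiv.funSplitAt ℓ α).symm (x', y))) x := by
  simp [modeProduct_apply, update_funSplitAt_symm, mulVec, dotProduct]

lemma frobNorm_modeProduct_le [Fintype ι] [Fintype α] (ℓ : ι) {M : Matrix α α ℝ}
    (hM : ∀ x, ∑ i, (M *ᵥ x) i ^ 2 ≤ ∑ i, x i ^ 2) (T : (ι → α) → ℝ) :
    frobNorm (modeProduct ℓ M T) ≤ frobNorm T := by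
  refine sqrt_le_sqrt ?_
  rw [sum_eq_sum_sum_funSplitAt ℓ, sum_eq_sum_sum_funSplitAt ℓ]
  simp only [modeProduct_funSplitAt_symm]
  exact sum_le_sum fun y _ => hM _

lemma frobNorm_sub_foldr_modeProduct_le [Fintype ι] [Fintype α] {P : ι → Matrix α α ℝ}
    (hP : ∀ ℓ x, ∑ i, (P ℓ *ᵥ x) i ^ 2 ≤ ∑ i, x i ^ 2) (T : (ι → α) → ℝ) (l : List ι) :
    frobNorm (T - l.foldr (fun ℓ => modeProduct ℓ (P ℓ)) T) ≤
      (l.map fun ℓ => frobNorm (T - modeProduct ℓ (P ℓ) T)).sum := by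
  induction l with
  | nil => simp [frobNorm]
  | cons ℓ l ih =>
    set F := l.foldr (fun ℓ => modeProduct ℓ (P ℓ)) T
    have hsplit : T - modeProduct ℓ (P ℓ) F =
        (T - modeProduct ℓ (P ℓ) T) + modeProduct ℓ (P ℓ) (T - F) := by
      rw [map_sub]; abel
    rw [List.foldr_cons, List.map_cons, List.sum_cons, hsplit]
    exact (frobNorm_add_le _ _).trans
      (add_le_add_right ((frobNorm_modeProduct_le ℓ (hP ℓ) _).trans ih) _)

noncomputable def cpTensor {κ : Type*} [Fintype ι] [Fintype κ] (ξ : κ → ℝ)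
    (b : ι → κ → α → ℝ) : (ι → α) → ℝ :=
  fun idx => ∑ ν, ξ ν * ∏ m, b m ν (idx m)

lemma cpTensor_funSplitAt_symm {κ : Type*} [Fintype ι] [Fintype κ] (ξ : κ → ℝ)
    (b : ι → κ → α → ℝ) (ℓ : ι) (x : α) (y : {j // j ≠ ℓ} → α) :
    cpTensor ξ b ((Equiv.funSplitAt ℓ α).symm (x, y)) =
      ∑ ν, b ℓ ν x * (ξ ν * ∏ j : {j // j ≠ ℓ}, b j ν (y j)) := by
  refine sum_congr rfl fun ν _ => ?_
  rw [prod_eq_mul_prod_subtype_ne _ ℓ]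
  simp only [Equiv.funSplitAt_symm_apply, dite_true]
  rw [prod_congr rfl fun j _ => by rw [dif_neg j.2]]
  ring

lemma modeProduct_cpTensor {κ : Type*} [Fintype ι] [Fintype α] [Fintype κ] (ℓ : ι)
    (M : Matrix α α ℝ) (ξ : κ → ℝ) (b : ι → κ → α → ℝ) :
    modeProduct ℓ M (cpTensor ξ b) = cpTensor ξ (Function.update b ℓ fun ν => M *ᵥ b ℓ ν) := by
  ext idx
  simp only [modeProduct_apply, cpTensor, prod_eq_mul_prod_subtype_ne _ ℓ, Function.update_self,
    mulVec, dotProduct, mul_sum, sum_mul]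
  rw [sum_comm]
  refine sum_congr rfl fun ν _ => sum_congr rfl fun x _ => ?_
  have hrest : ∏ j : {j // j ≠ ℓ}, b j ν (Function.update idx ℓ x j) =
      ∏ j : {j // j ≠ ℓ}, Function.update b ℓ (fun ν => M *ᵥ b ℓ ν) j ν (idx j) :=
    prod_congr rfl fun j _ => by rw [Function.update_of_ne j.2, Function.update_of_ne j.2]
  rw [hrest]
  ring

lemma frobNorm_cpTensor_le {κ : Type*} [Fintype ι] [Fintype α] [Fintype κ] (ξ : κ → ℝ)
    {b : ι → κ → α → ℝ} {ℓ : ι} (hb : ∀ m ≠ ℓ, ∀ ν, ∑ x, b m ν x ^ 2 = 1) :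
    frobNorm (cpTensor ξ b) ≤ √(∑ ν, ξ ν ^ 2) * √(∑ ν, ∑ x, b ℓ ν x ^ 2) := by
  have hrest : ∀ ν, ∑ y : {j // j ≠ ℓ} → α, (ξ ν * ∏ j : {j // j ≠ ℓ}, b j ν (y j)) ^ 2 =
      ξ ν ^ 2 := by
    intro ν
    simp only [mul_pow, ← mul_sum, ← prod_pow]
    rw [← Fintype.prod_sum fun (j : {j // j ≠ ℓ}) x => b j ν x ^ 2,
      prod_eq_one fun (j : {j // j ≠ ℓ}) _ => hb j j.2 ν, mul_one]
  rw [frobNorm, ← sqrt_mul' _ (sum_nonneg fun _ _ => sum_nonneg fun _ _ => sq_nonneg _)]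
  refine sqrt_le_sqrt ?_
  rw [sum_eq_sum_sum_funSplitAt ℓ, sum_comm]
  simp only [cpTensor_funSplitAt_symm]
  refine (sum_sum_sq_sum_mul_le _ _).trans_eq ?_
  rw [sum_congr rfl fun ν _ => hrest ν, mul_comm]

theorem frobNorm_cpTensor_sub_foldr_modeProduct_le {κ : Type*} [Fintype ι] [Fintype α]
    [DecidableEq α] [Fintype κ] (ξ : κ → ℝ) {b : ι → κ → α → ℝ}
    (hb : ∀ m ν, ∑ x, b m ν x ^ 2 = 1) {P : ι → Matrix α α ℝ}
    (hP : ∀ ℓ x, ∑ i, (P ℓ *ᵥ x) i ^ 2 ≤ ∑ i, x i ^ 2) (l : List ι) :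
    frobNorm (cpTensor ξ b - l.foldr (fun ℓ => modeProduct ℓ (P ℓ)) (cpTensor ξ b)) ≤
      √(∑ ν, ξ ν ^ 2) * (l.map fun ℓ => √(∑ ν, ∑ x, ((1 - P ℓ) *ᵥ b ℓ ν) x ^ 2)).sum := by
  refine (frobNorm_sub_foldr_modeProduct_le hP _ l).trans ?_
  rw [← List.sum_map_mul_left]
  refine List.sum_le_sum fun ℓ _ => ?_
  rw [← modeProduct_one_sub, modeProduct_cpTensor]
  refine (frobNorm_cpTensor_le ξ (ℓ := ℓ) fun m hm ν => ?_).trans_eq ?_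
  · rw [Function.update_of_ne hm]
    exact hb m ν
  · rw [Function.update_self]

end Tensor

lemma sum_fin_three_pi {α : Type*} [Fintype α] (f : (Fin 3 → α) → ℝ) :
    ∑ idx, f idx = ∑ i, ∑ j, ∑ k, f ![i, j, k] := by
  simp only [← (Fin.consEquiv fun _ => α).sum_comp, Fintype.sum_prod_type, Fintype.sum_unique]
  rfl

theorem rhosvd_error_bound_general (n R : ℕ) (r : Fin 3 → ℕ)
    (ξ : Fin R → ℝ) (a : Fin 3 → Fin R → Fin n → ℝ)
    (ha : ∀ ℓ ν, ∑ i, (a ℓ ν i) ^ 2 = 1)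
    (σ : Fin 3 → ℕ → ℝ) (z : Fin 3 → ℕ → Fin n → ℝ) (v : Fin 3 → ℕ → Fin R → ℝ)
    (hz : ∀ ℓ, ∀ k < min n R, ∀ k' < min n R,
      ∑ i, z ℓ k i * z ℓ k' i = if k = k' then 1 else 0)
    (hv : ∀ ℓ, ∀ k < min n R, ∀ k' < min n R,
      ∑ ν, v ℓ k ν * v ℓ k' ν = if k = k' then 1 else 0)
    (hsvd : ∀ ℓ ν i, a ℓ ν i = ∑ k ∈ Finset.range (min n R), σ ℓ k * z ℓ k i * v ℓ k ν)
    (hr : ∀ ℓ, r ℓ ≤ min n R)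
    (A A0 : Fin n → Fin n → Fin n → ℝ)
    (hA : ∀ i j k, A i j k = ∑ ν, ξ ν * a 0 ν i * a 1 ν j * a 2 ν k)
    (P : Fin 3 → Fin n → Fin n → ℝ)
    (hP : ∀ ℓ i i', P ℓ i i' = ∑ t ∈ Finset.range (r ℓ), z ℓ t i * z ℓ t i')
    (hA0 : ∀ i j k, A0 i j k =
      ∑ i', ∑ j', ∑ k', P 0 i i' * P 1 j j' * P 2 k k' * A i' j' k') :
    Real.sqrt (∑ i, ∑ j, ∑ k, (A i j k - A0 i j k) ^ 2) ≤
      Real.sqrt (∑ ν, (ξ ν) ^ 2) *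
        ∑ ℓ : Fin 3, Real.sqrt (∑ k ∈ Finset.Ico (r ℓ) (min n R), (σ ℓ k) ^ 2) := by
  obtain rfl : P = fun ℓ => projOnto (z ℓ) (r ℓ) := funext fun ℓ => funext₂ (hP ℓ)
  have hcpA : ∀ idx, cpTensor ξ a idx = A (idx 0) (idx 1) (idx 2) := fun idx => by
    simp [hA, cpTensor, Fin.prod_univ_three, mul_assoc]
  have hfoldr : ∀ i j k, [0, 1, 2].foldr (fun ℓ => modeProduct ℓ (projOnto (z ℓ) (r ℓ)))
      (cpTensor ξ a) ![i, j, k] = A0 i j k := fun i j k => by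
    simp [modeProduct_apply, hA0, hcpA, mul_sum, mul_assoc]
  have hres : ∀ ℓ, ∑ ν, ∑ i, ((1 - projOnto (z ℓ) (r ℓ)) *ᵥ a ℓ ν) i ^ 2 =
      ∑ k ∈ Ico (r ℓ) (min n R), σ ℓ k ^ 2 := fun ℓ =>
    sum_sum_sq_one_sub_projOnto_mulVec (hz ℓ)
      (fun k hk => by simpa [dotProduct] using hv ℓ k hk k hk)
      (fun ν => by ext i; simp [hsvd, mul_right_comm]) (hr ℓ)
  calc √(∑ i, ∑ j, ∑ k, (A i j k - A0 i j k) ^ 2)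
      = frobNorm (cpTensor ξ a -
          [0, 1, 2].foldr (fun ℓ => modeProduct ℓ (projOnto (z ℓ) (r ℓ))) (cpTensor ξ a)) := by
        simp only [frobNorm, sum_fin_three_pi, Pi.sub_apply, hfoldr, hcpA]
        simp
    _ ≤ _ := frobNorm_cpTensor_sub_foldr_modeProduct_le ξ ha
        (fun ℓ => sum_sq_projOnto_mulVec_le (hz ℓ) (hr ℓ)) _
    _ = _ := by
        simp only [hres, List.map_cons, List.map_nil, List.sum_cons, List.sum_nil,
          Fin.sum_univ_three]
        ring

theorem rhosvd_error_bound (n R : ℕ) (r : Fin 3 → ℕ)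
    (ξ : Fin R → ℝ) (a : Fin 3 → Fin R → Fin n → ℝ)
    (ha : ∀ ℓ ν, ∑ i, (a ℓ ν i) ^ 2 = 1)
    (σ : Fin 3 → ℕ → ℝ) (z : Fin 3 → ℕ → Fin n → ℝ) (v : Fin 3 → ℕ → Fin R → ℝ)
    (hσnn : ∀ ℓ k, 0 ≤ σ ℓ k)
    (hσdec : ∀ ℓ k k', k ≤ k' → σ ℓ k' ≤ σ ℓ k)
    (hz : ∀ ℓ, ∀ k < min n R, ∀ k' < min n R,
      ∑ i, z ℓ k i * z ℓ k' i = if k = k' then 1 else 0)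
    (hv : ∀ ℓ, ∀ k < min n R, ∀ k' < min n R,
      ∑ ν, v ℓ k ν * v ℓ k' ν = if k = k' then 1 else 0)
    (hsvd : ∀ ℓ ν i, a ℓ ν i = ∑ k ∈ Finset.range (min n R), σ ℓ k * z ℓ k i * v ℓ k ν)
    (hr : ∀ ℓ, r ℓ ≤ min n R)
    (A A0 : Fin n → Fin n → Fin n → ℝ)
    (hA : ∀ i j k, A i j k = ∑ ν, ξ ν * a 0 ν i * a 1 ν j * a 2 ν k)
    (P : Fin 3 → Fin n → Fin n → ℝ)
    (hP : ∀ ℓ i i', P ℓ i i' = ∑ t ∈ Finset.range (r ℓ), z ℓ t i * z ℓ t i')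
    (hA0 : ∀ i j k, A0 i j k =
      ∑ i', ∑ j', ∑ k', P 0 i i' * P 1 j j' * P 2 k k' * A i' j' k') :
    Real.sqrt (∑ i, ∑ j, ∑ k, (A i j k - A0 i j k) ^ 2) ≤
      Real.sqrt (∑ ν, (ξ ν) ^ 2) *
        ∑ ℓ : Fin 3, Real.sqrt (∑ k ∈ Finset.Ico (r ℓ) (min n R), (σ ℓ k) ^ 2) :=
  rhosvd_error_bound_general n R r ξ a ha σ z v hz hv hsvd hr A A0 hA P hP hA0
end

section
/- Let A = ∑_{ν=1}^{R} ξ_ν a_ν^{(1)} ⊗ a_ν^{(2)} ⊗ a_ν^{(3)} where all entries of all vectors a_ν^{(ℓ)} ∈ ℝⁿ are nonnegative, each a_ν^{(ℓ)} has unit Euclidean norm, and all ξ_ν ≥ 0. Then ∑_{ν=1}^{R} ξ_ν² ≤ ‖A‖², where ‖·‖ is the Frobenius norm. -/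
open Finset

theorem stability_of_nonnegative_canonical (n R : ℕ)
    (ξ : Fin R → ℝ) (a : Fin 3 → Fin R → Fin n → ℝ)
    (hnn : ∀ ℓ ν i, 0 ≤ a ℓ ν i)
    (hunit : ∀ ℓ ν, ∑ i, (a ℓ ν i) ^ 2 = 1)
    (hξ : ∀ ν, 0 ≤ ξ ν) :
    ∑ ν, (ξ ν) ^ 2 ≤
      ∑ i, ∑ j, ∑ k, (∑ ν, ξ ν * a 0 ν i * a 1 ν j * a 2 ν k) ^ 2 := by
  set F : Fin R → Fin n → Fin n → Fin n → ℝ :=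
    fun ν i j k => ξ ν * a 0 ν i * a 1 ν j * a 2 ν k with hF
  have hFnn : ∀ ν i j k, 0 ≤ F ν i j k := fun ν i j k =>
    mul_nonneg (mul_nonneg (mul_nonneg (hξ ν) (hnn 0 ν i)) (hnn 1 ν j)) (hnn 2 ν k)
  calc ∑ ν, (ξ ν) ^ 2
      = ∑ ν : Fin R, ∑ i, ∑ j, ∑ k, F ν i j k * F ν i j k := by
        apply Finset.sum_congr rfl
        intro ν _
        have h : ∀ i j k : Fin n, F ν i j k * F ν i j k
            = ((ξ ν)^2 * (a 0 ν i)^2 * (a 1 ν j)^2) * (a 2 ν k)^2 := by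
          intro i j k; simp only [hF]; ring
        simp only [h, ← Finset.mul_sum, hunit, mul_one]
    _ = ∑ i, ∑ j, ∑ k, ∑ ν : Fin R, F ν i j k * F ν i j k := by
        rw [Finset.sum_comm]
        refine Finset.sum_congr rfl fun i _ => ?_
        rw [Finset.sum_comm]
        refine Finset.sum_congr rfl fun j _ => ?_
        rw [Finset.sum_comm]
    _ ≤ ∑ i, ∑ j, ∑ k, (∑ ν, F ν i j k) ^ 2 := by
        refine Finset.sum_le_sum fun i _ => Finset.sum_le_sum fun j _ =>
          Finset.sum_le_sum fun k _ => ?_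
        rw [sq, Finset.sum_mul_sum]
        refine Finset.sum_le_sum fun ν _ => ?_
        exact Finset.single_le_sum (f := fun μ => F ν i j k * F μ i j k)
          (fun μ _ => mul_nonneg (hFnn ν i j k) (hFnn μ i j k)) (Finset.mem_univ ν)
end
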